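/- arXiv:2501.06190 — 5 statements merged into one kernel-verified Lean document; each statement's English description precedes it below -/
import Mathlib

section
/- Let h > 0, let M = [[a,b],[c,d]] be a real matrix with det M = 1 and a > 0, and let f ∈ 𝒮(ℝ) be a Schwartz function. Then for every vector v = (v₁,v₂) ∈ ℝ², the metaplectic operator intertwines the quantized translations: M̂_h(T^h_v f) = T^h_{Mv}(M̂_h f), as an identity of functions on ℝ (pointwise in x), where Mv denotes the image of the vector v under the linear map M. -/
open Real Complex MeasureTheory

noncomputable section

/-- Quantized translation `T^h_{(a,b)}`. -/
def Tq (h a b : ℝ) (u : ℝ → ℂ) : ℝ → ℂ := fun x =>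
  Complex.exp ((-(Real.pi * a * b / h) : ℝ) * Complex.I) *
    (Complex.exp ((2 * Real.pi * b * x / h : ℝ) * Complex.I) * u (x - a))

/-- Gaussian wave packet `Φ^h_{(q,p)}`. -/
def WP (h q p : ℝ) : ℝ → ℂ := fun x =>
  (((2 / h) ^ ((1 : ℝ) / 4) : ℝ) : ℂ) *
    (Complex.exp ((2 * Real.pi * p * (x - q) / h : ℝ) * Complex.I) *
      Complex.exp ((-(Real.pi * (x - q) ^ 2 / h) : ℝ) : ℂ))

/-- The L² inner product `⟨f, g⟩ = ∫ f x * conj (g x)`. -/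
def ip (f g : ℝ → ℂ) : ℂ := ∫ x : ℝ, f x * (starRingEnd ℂ) (g x)

/-- The `h`-Fourier transform. -/
def Fh (h : ℝ) (f : ℝ → ℂ) : ℝ → ℂ := fun ξ =>
  ((h : ℂ))⁻¹ * ∫ x : ℝ, Complex.exp ((-(2 * Real.pi * x * ξ / h) : ℝ) * Complex.I) * f x

/-- The metaplectic operator of the matrix `[[a,b],[c,d]]`. -/
def Mhat (h a b c d : ℝ) (f : ℝ → ℂ) : ℝ → ℂ := fun x =>
  ((Real.sqrt a)⁻¹ : ℂ) *
    ∫ ξ : ℝ,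
      Complex.exp ((2 * Real.pi * ((c * x ^ 2 - b * ξ ^ 2 + 2 * x * ξ) / (2 * a)) / h : ℝ) *
        Complex.I) * Fh h f ξ

lemma expI_mul_mul (s t : ℝ) (z : ℂ) :
    Complex.exp ((s : ℂ) * Complex.I) * (Complex.exp ((t : ℂ) * Complex.I) * z)
      = Complex.exp (((s + t : ℝ) : ℂ) * Complex.I) * z := by
  rw [← mul_assoc, ← Complex.exp_add, ← add_mul]; norm_cast

lemma expI_congr {s t : ℝ} (hst : s = t) :
    Complex.exp ((s : ℂ) * Complex.I) = Complex.exp ((t : ℂ) * Complex.I) := by rw [hst]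

/-- the metaplectic operator intertwines quantized translations. -/
theorem metaplectic_intertwines_translations (h : ℝ) (hh : 0 < h) (a b c d : ℝ)
    (hdet : a * d - b * c = 1) (ha : 0 < a) (f : SchwartzMap ℝ ℂ) (v₁ v₂ : ℝ) (x : ℝ) :
    Mhat h a b c d (Tq h v₁ v₂ f) x =
      Tq h (a * v₁ + b * v₂) (c * v₁ + d * v₂) (Mhat h a b c d f) x := by
  have hh' : h ≠ 0 := hh.ne'
  have ha' : a ≠ 0 := ha.ne'
  -- Step 1: Fourier transform of a quantized translation
  have key : ∀ ξ : ℝ, Fh h (Tq h v₁ v₂ ⇑f) ξ =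
      Complex.exp (((Real.pi * v₁ * v₂ / h - 2 * Real.pi * v₁ * ξ / h : ℝ) : ℂ) * Complex.I) *
        Fh h (⇑f) (ξ - v₂) := by
    intro ξ
    unfold Fh Tq
    have h1 : (∫ y : ℝ, Complex.exp ((-(2 * Real.pi * y * ξ / h) : ℝ) * Complex.I) *
          (Complex.exp ((-(Real.pi * v₁ * v₂ / h) : ℝ) * Complex.I) *
            (Complex.exp ((2 * Real.pi * v₂ * y / h : ℝ) * Complex.I) * f (y - v₁))))
        = Complex.exp (((Real.pi * v₁ * v₂ / h - 2 * Real.pi * v₁ * ξ / h : ℝ) : ℂ) * Complex.I) *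
          ∫ y : ℝ, Complex.exp ((-(2 * Real.pi * y * (ξ - v₂) / h) : ℝ) * Complex.I) * f y := by
      calc (∫ y : ℝ, Complex.exp ((-(2 * Real.pi * y * ξ / h) : ℝ) * Complex.I) *
              (Complex.exp ((-(Real.pi * v₁ * v₂ / h) : ℝ) * Complex.I) *
                (Complex.exp ((2 * Real.pi * v₂ * y / h : ℝ) * Complex.I) * f (y - v₁))))
          = ∫ y : ℝ, Complex.exp ((-(2 * Real.pi * (y + v₁) * ξ / h) : ℝ) * Complex.I) *
              (Complex.exp ((-(Real.pi * v₁ * v₂ / h) : ℝ) * Complex.I) *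
                (Complex.exp ((2 * Real.pi * v₂ * (y + v₁) / h : ℝ) * Complex.I) *
                  f (y + v₁ - v₁))) :=
            (MeasureTheory.integral_add_right_eq_self
              (fun y : ℝ => Complex.exp ((-(2 * Real.pi * y * ξ / h) : ℝ) * Complex.I) *
                (Complex.exp ((-(Real.pi * v₁ * v₂ / h) : ℝ) * Complex.I) *
                  (Complex.exp ((2 * Real.pi * v₂ * y / h : ℝ) * Complex.I) * f (y - v₁)))) v₁).symm
        _ = ∫ y : ℝ, Complex.exp (((Real.pi * v₁ * v₂ / h - 2 * Real.pi * v₁ * ξ / h : ℝ) : ℂ) *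
                Complex.I) *
              (Complex.exp ((-(2 * Real.pi * y * (ξ - v₂) / h) : ℝ) * Complex.I) * f y) := by
            congr 1; funext y
            rw [add_sub_cancel_right, expI_mul_mul, expI_mul_mul, expI_mul_mul]
            refine congrArg (· * (f y : ℂ)) (expI_congr ?_)
            field_simp
            ring
        _ = _ := MeasureTheory.integral_const_mul _ _
    rw [h1]; ring
  -- Step 2: main computation
  unfold Mhat
  simp only [key]
  unfold Tq
  beta_reduce
  have h2 : (∫ ξ : ℝ,
        Complex.exp ((2 * Real.pi * ((c * x ^ 2 - b * ξ ^ 2 + 2 * x * ξ) / (2 * a)) / h : ℝ) *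
            Complex.I) *
          (Complex.exp (((Real.pi * v₁ * v₂ / h - 2 * Real.pi * v₁ * ξ / h : ℝ) : ℂ) *
              Complex.I) * Fh h (⇑f) (ξ - v₂)))
      = Complex.exp ((-(Real.pi * (a * v₁ + b * v₂) * (c * v₁ + d * v₂) / h) : ℝ) * Complex.I) *
        (Complex.exp ((2 * Real.pi * (c * v₁ + d * v₂) * x / h : ℝ) * Complex.I) *
          ∫ ξ : ℝ,
            Complex.exp ((2 * Real.pi * ((c * (x - (a * v₁ + b * v₂)) ^ 2 - b * ξ ^ 2 +
                2 * (x - (a * v₁ + b * v₂)) * ξ) / (2 * a)) / h : ℝ) * Complex.I) *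
              Fh h (⇑f) ξ) := by
    calc (∫ ξ : ℝ,
          Complex.exp ((2 * Real.pi * ((c * x ^ 2 - b * ξ ^ 2 + 2 * x * ξ) / (2 * a)) / h : ℝ) *
              Complex.I) *
            (Complex.exp (((Real.pi * v₁ * v₂ / h - 2 * Real.pi * v₁ * ξ / h : ℝ) : ℂ) *
                Complex.I) * Fh h (⇑f) (ξ - v₂)))
        = ∫ ξ : ℝ,
            Complex.exp ((2 * Real.pi * ((c * x ^ 2 - b * (ξ + v₂) ^ 2 + 2 * x * (ξ + v₂)) /
                (2 * a)) / h : ℝ) * Complex.I) *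
              (Complex.exp (((Real.pi * v₁ * v₂ / h - 2 * Real.pi * v₁ * (ξ + v₂) / h : ℝ) : ℂ) *
                  Complex.I) * Fh h (⇑f) (ξ + v₂ - v₂)) :=
          (MeasureTheory.integral_add_right_eq_self
            (fun ξ : ℝ =>
              Complex.exp ((2 * Real.pi * ((c * x ^ 2 - b * ξ ^ 2 + 2 * x * ξ) / (2 * a)) / h : ℝ) *
                  Complex.I) *
                (Complex.exp (((Real.pi * v₁ * v₂ / h - 2 * Real.pi * v₁ * ξ / h : ℝ) : ℂ) *
                    Complex.I) * Fh h (⇑f) (ξ - v₂))) v₂).symm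
      _ = ∫ ξ : ℝ,
            Complex.exp ((-(Real.pi * (a * v₁ + b * v₂) * (c * v₁ + d * v₂) / h) : ℝ) *
                Complex.I) *
              (Complex.exp ((2 * Real.pi * (c * v₁ + d * v₂) * x / h : ℝ) * Complex.I) *
                (Complex.exp ((2 * Real.pi * ((c * (x - (a * v₁ + b * v₂)) ^ 2 - b * ξ ^ 2 +
                    2 * (x - (a * v₁ + b * v₂)) * ξ) / (2 * a)) / h : ℝ) * Complex.I) *
                  Fh h (⇑f) ξ)) := by
          congr 1; funext ξ
          rw [add_sub_cancel_right, expI_mul_mul, expI_mul_mul, expI_mul_mul]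
          refine congrArg (· * (Fh h (⇑f) ξ)) (expI_congr ?_)
          have hd : d = (1 + b * c) / a := by field_simp; linarith
          subst hd
          field_simp
          ring
      _ = _ := by
          rw [MeasureTheory.integral_const_mul, MeasureTheory.integral_const_mul]
  rw [h2]; ring
end
end

section
/- Let α, β, γ ∈ ℝ, let m be the matrix [[γ, β],[−α, −γ]], and write exp(tm) = [[a_t, b_t],[c_t, d_t]] for t ∈ ℝ. Let ħ > 0, let ξ ∈ ℝ, and let I ⊆ ℝ be an open interval containing 0 on which a_t > 0. Then the function u(t,x) := a_t^{−1/2} · exp( (i/ħ) · (1/(2a_t)) · (c_t·x² + 2xξ − b_t·ξ²) ) satisfies u(0,x) = e^{ixξ/ħ} for all x ∈ ℝ, and solves the Schrödinger equation iħ·∂_t u(t,x) = (α/2)·x²·u(t,x) − iħγ·( x·∂_x u(t,x) + u(t,x)/2 ) − (ħ²β/2)·∂²_{xx} u(t,x) for all t ∈ I and x ∈ ℝ. -/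
/-!
Write the wave function as `u = A · exp (i S / ħ)` with amplitude `A = a⁻¹ᐟ²` and phase
`S = p x² + q x + r`, where `p = c / (2a)`, `q = ξ / a`, `r = -b ξ² / (2a)`. Since `S` is
quadratic in `x`, the Schrödinger equation for `u` splits into the Hamilton–Jacobi equation
`∂ₜS + H(x, ∂ₓS) = 0`, i.e. Riccati-type equations for `p`, `q`, `r`, and the transport equation
`A' = -(γ/2 + β p) A`. These follow from the flow equation `d/dt exp(tm) = m exp(tm)`; the one
for `r` also needs `det exp(tm) = ad - bc = 1`, which holds because `m` is traceless.
-/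

open Real Complex Matrix

theorem Matrix.hasDerivAt_exp_smul_apply {n : Type*} [Fintype n] [DecidableEq n]
    (m : Matrix n n ℝ) (t : ℝ) (i j : n) :
    HasDerivAt (fun t : ℝ => NormedSpace.exp (t • m) i j)
      ((m * NormedSpace.exp (t • m)) i j) t := by
  -- any normed-algebra structure inducing the entrywise topology will do
  let := Matrix.linftyOpNormedRing (n := n) (α := ℝ)
  let := Matrix.linftyOpNormedAlgebra (n := n) (R := ℝ) (α := ℝ)
  exact (LinearMap.toContinuousLinearMap (Matrix.entryLinearMap ℝ ℝ i j)).hasFDerivAt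
    |>.comp_hasDerivAt t (hasDerivAt_exp_smul_const' (𝕂 := ℝ) m t)

theorem Matrix.det_exp_smul_of_trace_eq_zero (m : Matrix (Fin 2) (Fin 2) ℝ) (hm : m.trace = 0)
    (t : ℝ) : (NormedSpace.exp (t • m)).det = 1 := by
  have hderiv (t : ℝ) : HasDerivAt (fun t : ℝ => (NormedSpace.exp (t • m)).det) 0 t := by
    have h := m.hasDerivAt_exp_smul_apply t
    simp only [det_fin_two]
    refine (((h 0 0).mul (h 1 1)).sub ((h 0 1).mul (h 1 0))).congr_deriv ?_
    rw [trace_fin_two] at hm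
    set E := NormedSpace.exp (t • m)
    simp only [mul_apply, Fin.sum_univ_two]
    linear_combination (E 0 0 * E 1 1 - E 0 1 * E 1 0) * hm
  simpa using is_const_of_deriv_eq_zero (fun t => (hderiv t).differentiableAt)
    (fun t => (hderiv t).deriv) t 0

theorem hasDerivAt_mul_cexp_quadratic (c P Q R : ℂ) (x : ℝ) :
    HasDerivAt (fun y : ℝ => c * cexp (P * y ^ 2 + Q * y + R))
      (c * cexp (P * x ^ 2 + Q * x + R) * (2 * P * x + Q)) x := by
  have hquad : HasDerivAt (fun z : ℂ => P * z ^ 2 + Q * z + R) (2 * P * x + Q) x := by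
    refine ((((hasDerivAt_pow 2 (x : ℂ)).const_mul P).add
      ((hasDerivAt_id (x : ℂ)).const_mul Q)).add_const R).congr_deriv ?_
    simp only [Nat.cast_ofNat]
    ring
  refine ((hquad.cexp.const_mul c).comp_ofReal).congr_deriv ?_
  ring

theorem deriv_deriv_mul_cexp_quadratic (c P Q R : ℂ) (x : ℝ) :
    deriv (deriv fun y : ℝ => c * cexp (P * y ^ 2 + Q * y + R)) x =
      c * cexp (P * x ^ 2 + Q * x + R) * ((2 * P * x + Q) ^ 2 + 2 * P) := by
  have hlin : HasDerivAt (fun y : ℝ => 2 * P * y + Q) (2 * P) x := by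
    simpa using ((hasDerivAt_id (x : ℂ)).const_mul (2 * P)).comp_ofReal.add_const Q
  rw [funext fun y => (hasDerivAt_mul_cexp_quadratic c P Q R y).deriv]
  refine (((hasDerivAt_mul_cexp_quadratic c P Q R x).mul hlin).congr_deriv ?_).deriv
  ring

theorem schrodinger_of_quadratic_phase {α β γ ħ : ℝ} (hħ : ħ ≠ 0) {A p q r : ℝ → ℝ} {t : ℝ}
    (hA : HasDerivAt A (-(γ / 2 + β * p t) * A t) t)
    (hp : HasDerivAt p (-(α / 2 + 2 * γ * p t + 2 * β * p t ^ 2)) t)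
    (hq : HasDerivAt q (-(γ + 2 * β * p t) * q t) t)
    (hr : HasDerivAt r (-(β / 2 * q t ^ 2)) t)
    {u : ℝ → ℝ → ℂ}
    (hu : ∀ t x, u t x = A t * cexp (I / ħ * (p t * x ^ 2 + q t * x + r t))) (x : ℝ) :
    I * ħ * deriv (fun t' => u t' x) t =
      ((α / 2 : ℝ) : ℂ) * x ^ 2 * u t x - I * ħ * γ * (x * deriv (u t) x + u t x / 2) -
        ((ħ ^ 2 * β / 2 : ℝ) : ℂ) * deriv (deriv (u t)) x := by
  have hdt : HasDerivAt (fun t => (A t : ℂ) * cexp (I / ħ * (p t * x ^ 2 + q t * x + r t))) _ t :=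
    hA.ofReal_comp.mul ((((hp.ofReal_comp.mul_const _).add
      (hq.ofReal_comp.mul_const _)).add hr.ofReal_comp).const_mul (I / ħ)).cexp
  have hux : u t = fun y : ℝ => (A t : ℂ) *
      cexp (I / ħ * p t * y ^ 2 + I / ħ * q t * y + I / ħ * r t) := by
    funext y
    rw [hu]
    ring_nf
  rw [show (fun t' => u t' x) = _ from funext fun t' => hu t' x, hdt.deriv, hu t x, hux,
    deriv_deriv_mul_cexp_quadratic, (hasDerivAt_mul_cexp_quadratic _ _ _ _ x).deriv,
    show I / ħ * p t * x ^ 2 + I / ħ * q t * x + I / ħ * r t =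
      I / ħ * (p t * x ^ 2 + q t * x + r t) by ring]
  generalize cexp _ = E
  have hħC : (ħ : ℂ) ≠ 0 := ofReal_ne_zero.mpr hħ
  field_simp
  push_cast
  linear_combination (-(ħ : ℂ) ^ 2 * E * A t * x ^ 2 * α) * I_sq

section PhaseCoefficients

variable {α β γ : ℝ} {E : ℝ → Matrix (Fin 2) (Fin 2) ℝ} {t : ℝ}
  (hE : ∀ i j, HasDerivAt (fun t => E t i j) ((!![γ, β; -α, -γ] * E t) i j) t)
include hE

theorem hasDerivAt_inv_sqrt_amplitude (ha0 : 0 < E t 0 0) :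
    HasDerivAt (fun t => (√(E t 0 0))⁻¹)
      (-(γ / 2 + β * (E t 1 0 / (2 * E t 0 0))) * (√(E t 0 0))⁻¹) t := by
  refine (((hasDerivAt_sqrt ha0.ne').comp t (hE 0 0)).inv (sqrt_pos.mpr ha0).ne').congr_deriv ?_
  simp only [mul_apply, Fin.sum_univ_two, of_apply, cons_val', cons_val_zero, cons_val_one,
    cons_val_fin_one, Function.comp_apply]
  field_simp
  rw [sq_sqrt ha0.le]

theorem hasDerivAt_quadratic_phase_coeff (ha0 : E t 0 0 ≠ 0) :
    HasDerivAt (fun t => E t 1 0 / (2 * E t 0 0))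
      (-(α / 2 + 2 * γ * (E t 1 0 / (2 * E t 0 0)) + 2 * β * (E t 1 0 / (2 * E t 0 0)) ^ 2)) t := by
  refine ((hE 1 0).div ((hE 0 0).const_mul 2) (by positivity)).congr_deriv ?_
  simp only [mul_apply, Fin.sum_univ_two, of_apply, cons_val', cons_val_zero, cons_val_one,
    cons_val_fin_one]
  field_simp
  ring

theorem hasDerivAt_linear_phase_coeff (ξ : ℝ) (ha0 : E t 0 0 ≠ 0) :
    HasDerivAt (fun t => ξ / E t 0 0)
      (-(γ + 2 * β * (E t 1 0 / (2 * E t 0 0))) * (ξ / E t 0 0)) t := by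
  refine ((hasDerivAt_const t ξ).div (hE 0 0) ha0).congr_deriv ?_
  simp only [mul_apply, Fin.sum_univ_two, of_apply, cons_val', cons_val_zero, cons_val_one,
    cons_val_fin_one]
  field_simp
  ring

theorem hasDerivAt_constant_phase_coeff (ξ : ℝ) (hdet : (E t).det = 1) (ha0 : E t 0 0 ≠ 0) :
    HasDerivAt (fun t => -E t 0 1 * ξ ^ 2 / (2 * E t 0 0)) (-(β / 2 * (ξ / E t 0 0) ^ 2)) t := by
  refine (((hE 0 1).neg.mul_const (ξ ^ 2)).div ((hE 0 0).const_mul 2)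
    (by positivity)).congr_deriv ?_
  rw [det_fin_two] at hdet
  simp only [mul_apply, Fin.sum_univ_two, of_apply, cons_val', cons_val_zero, cons_val_one,
    cons_val_fin_one, Pi.neg_apply]
  field_simp
  linear_combination (-β * ξ ^ 2) * hdet

end PhaseCoefficients

theorem quadratic_hamiltonian_propagator_general (α β γ : ℝ) (hb : ℝ) (hhb : 0 < hb) (ξ : ℝ)
    (m : Matrix (Fin 2) (Fin 2) ℝ) (hm : m = !![γ, β; -α, -γ])
    (r s : ℝ)
    (apos : ∀ t ∈ Set.Ioo r s, 0 < NormedSpace.exp (t • m) 0 0)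
    (u : ℝ → ℝ → ℂ)
    (hu : ∀ t x : ℝ,
      u t x = (((Real.sqrt (NormedSpace.exp (t • m) 0 0))⁻¹ : ℝ) : ℂ) *
        Complex.exp ((Complex.I / (hb : ℂ)) *
          ((1 : ℂ) / (2 * ((NormedSpace.exp (t • m) 0 0 : ℝ) : ℂ))) *
          (((NormedSpace.exp (t • m) 1 0 : ℝ) : ℂ) * (x : ℂ) ^ 2 +
            2 * (x : ℂ) * (ξ : ℂ) -
            ((NormedSpace.exp (t • m) 0 1 : ℝ) : ℂ) * (ξ : ℂ) ^ 2))) :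
    (∀ x : ℝ, u 0 x = Complex.exp (Complex.I * (x : ℂ) * (ξ : ℂ) / (hb : ℂ))) ∧
    ∀ t ∈ Set.Ioo r s, ∀ x : ℝ,
      Complex.I * (hb : ℂ) * deriv (fun t' : ℝ => u t' x) t =
        ((α / 2 : ℝ) : ℂ) * (x : ℂ) ^ 2 * u t x -
          Complex.I * (hb : ℂ) * (γ : ℂ) *
            ((x : ℂ) * deriv (fun y : ℝ => u t y) x + u t x / 2) -
          ((hb ^ 2 * β / 2 : ℝ) : ℂ) * deriv (deriv (fun y : ℝ => u t y)) x := by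
  refine ⟨fun x => ?_, fun t ht x => ?_⟩
  · rw [hu, zero_smul, NormedSpace.exp_zero]
    simp only [one_apply_eq, one_apply_ne one_ne_zero, one_apply_ne zero_ne_one, Real.sqrt_one,
      inv_one, ofReal_one, ofReal_zero, one_mul]
    ring_nf
  subst hm
  have hE := hasDerivAt_exp_smul_apply !![γ, β; -α, -γ] t
  have hdet := det_exp_smul_of_trace_eq_zero !![γ, β; -α, -γ] (by simp [trace_fin_two]) t
  have ha0 := apos t ht
  refine schrodinger_of_quadratic_phase hhb.ne' (hasDerivAt_inv_sqrt_amplitude hE ha0)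
    (hasDerivAt_quadratic_phase_coeff hE ha0.ne') (hasDerivAt_linear_phase_coeff hE ξ ha0.ne')
    (hasDerivAt_constant_phase_coeff hE ξ hdet ha0.ne') (fun t x => ?_) x
  rw [hu]
  push_cast
  ring_nf

/-- the explicit quadratic-phase function solves the Schrödinger
equation of the Weyl-quantized quadratic Hamiltonian. -/
theorem quadratic_hamiltonian_propagator (α β γ : ℝ) (hb : ℝ) (hhb : 0 < hb) (ξ : ℝ)
    (m : Matrix (Fin 2) (Fin 2) ℝ) (hm : m = !![γ, β; -α, -γ])
    (r s : ℝ) (hr : r < 0) (hs : 0 < s)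
    (apos : ∀ t ∈ Set.Ioo r s, 0 < NormedSpace.exp (t • m) 0 0)
    (u : ℝ → ℝ → ℂ)
    (hu : ∀ t x : ℝ,
      u t x = (((Real.sqrt (NormedSpace.exp (t • m) 0 0))⁻¹ : ℝ) : ℂ) *
        Complex.exp ((Complex.I / (hb : ℂ)) *
          ((1 : ℂ) / (2 * ((NormedSpace.exp (t • m) 0 0 : ℝ) : ℂ))) *
          (((NormedSpace.exp (t • m) 1 0 : ℝ) : ℂ) * (x : ℂ) ^ 2 +
            2 * (x : ℂ) * (ξ : ℂ) -
            ((NormedSpace.exp (t • m) 0 1 : ℝ) : ℂ) * (ξ : ℂ) ^ 2))) :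
    (∀ x : ℝ, u 0 x = Complex.exp (Complex.I * (x : ℂ) * (ξ : ℂ) / (hb : ℂ))) ∧
    ∀ t ∈ Set.Ioo r s, ∀ x : ℝ,
      Complex.I * (hb : ℂ) * deriv (fun t' : ℝ => u t' x) t =
        ((α / 2 : ℝ) : ℂ) * (x : ℂ) ^ 2 * u t x -
          Complex.I * (hb : ℂ) * (γ : ℂ) *
            ((x : ℂ) * deriv (fun y : ℝ => u t y) x + u t x / 2) -
          ((hb ^ 2 * β / 2 : ℝ) : ℂ) * deriv (deriv (fun y : ℝ => u t y)) x :=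
  quadratic_hamiltonian_propagator_general α β γ hb hhb ξ m hm r s apos u hu
end

section
/- Fix (q₀,p₀) ∈ ℝ². Then the Husimi measures of the wave packets Φ^h_{(q₀,p₀)} converge weakly to the Dirac mass at (q₀,p₀) as h → 0⁺: for every bounded continuous function g : ℝ² → ℂ, the integral ∫_{ℝ²} h^{−1}·|⟨Φ^h_{(q₀,p₀)}, Φ^h_{(q,p)}⟩|² · g(q,p) dq dp tends to g(q₀,p₀) as h → 0⁺. -/
open Real Complex MeasureTheory

noncomputable section

/-! The overlap of two wave packets is a Gaussian integral, and its squared modulus is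
`exp (-π |z - z₀|² / h)`. Hence the Husimi density of `Φ^h_{z₀}` is `ε⁻² φ ((z - z₀) / ε)` with
`ε = √h` and `φ w = exp (-π |w|²)`, a kernel of total mass one. After the substitution
`z = z₀ + ε w` the integral becomes `∫ φ w • g (z₀ + ε w) dw`, which tends to `g z₀` by dominated
convergence since `g` is bounded and continuous. -/

open Filter Topology Module

theorem norm_integral_cexp_quadratic {β : ℝ} (hβ : 0 < β) (c d : ℂ) :
    ‖∫ x : ℝ, cexp (-β * x ^ 2 + c * x + d)‖ =
      √(π / β) * Real.exp (d.re + (c.re ^ 2 - c.im ^ 2) / (4 * β)) := by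
  rw [integral_cexp_quadratic (by simpa using hβ), norm_mul, norm_exp, neg_neg,
    ← ofReal_div, norm_cpow_eq_rpow_re_of_pos (by positivity), sqrt_eq_rpow]
  congr 2
  · norm_num
  · have h4β : (4 * -(β : ℂ)) = ((-(4 * β) : ℝ) : ℂ) := by push_cast; ring
    rw [h4β, sub_re, div_ofReal_re, sq, mul_re]
    field_simp
    ring

theorem exp_neg_mul_sq_add_sq (b : ℝ) (w : ℝ × ℝ) :
    Real.exp (-b * (w.1 ^ 2 + w.2 ^ 2)) = Real.exp (-b * w.1 ^ 2) * Real.exp (-b * w.2 ^ 2) := by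
  rw [← Real.exp_add, mul_add]

theorem integrable_exp_neg_mul_sq_add_sq {b : ℝ} (hb : 0 < b) :
    Integrable (fun w : ℝ × ℝ => Real.exp (-b * (w.1 ^ 2 + w.2 ^ 2))) := by
  simp_rw [exp_neg_mul_sq_add_sq, Measure.volume_eq_prod]
  exact (integrable_exp_neg_mul_sq hb).mul_prod (integrable_exp_neg_mul_sq hb)

theorem integral_exp_neg_mul_sq_add_sq {b : ℝ} (hb : 0 ≤ b) :
    ∫ w : ℝ × ℝ, Real.exp (-b * (w.1 ^ 2 + w.2 ^ 2)) = π / b := by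
  simp_rw [exp_neg_mul_sq_add_sq, Measure.volume_eq_prod]
  rw [integral_prod_mul (fun x : ℝ => Real.exp (-b * x ^ 2)) (fun x : ℝ => Real.exp (-b * x ^ 2)),
    integral_gaussian, mul_self_sqrt (by positivity)]

theorem tendsto_sqrt_nhdsGT_zero : Tendsto Real.sqrt (𝓝[>] 0) (𝓝[>] 0) :=
  tendsto_nhdsWithin_iff.2
    ⟨(continuous_sqrt.tendsto' 0 0 sqrt_zero).mono_left nhdsWithin_le_nhds,
      eventually_nhdsWithin_of_forall fun _ hh => sqrt_pos.2 hh⟩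

theorem tendsto_integral_smul_comp_add_smul {E F : Type*} [NormedAddCommGroup E]
    [NormedSpace ℝ E] [MeasurableSpace E] [OpensMeasurableSpace E] [SecondCountableTopology E]
    [NormedAddCommGroup F] [NormedSpace ℝ F] [CompleteSpace F] {μ : Measure E} {φ : E → ℝ}
    (hφ : Integrable φ μ) {g : E → F} (hg_bdd : ∃ C, ∀ z, ‖g z‖ ≤ C) (hg : Continuous g)
    (z₀ : E) :
    Tendsto (fun ε : ℝ => ∫ w, φ w • g (z₀ + ε • w) ∂μ) (𝓝 0) (𝓝 ((∫ w, φ w ∂μ) • g z₀)) := by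
  obtain ⟨C, hC⟩ := hg_bdd
  rw [← integral_smul_const]
  refine tendsto_integral_filter_of_dominated_convergence (fun w => ‖φ w‖ * C)
    (Eventually.of_forall fun ε => ?_) (Eventually.of_forall fun ε => ae_of_all _ fun w => ?_)
    (hφ.norm.mul_const C) (ae_of_all _ fun w => ?_)
  · exact hφ.aestronglyMeasurable.smul (hg.comp (by fun_prop)).aestronglyMeasurable
  · rw [norm_smul]
    exact mul_le_mul_of_nonneg_left (hC _) (norm_nonneg _)
  · refine ((hg.tendsto z₀).comp ?_).const_smul (φ w)
    exact (by fun_prop : Continuous fun ε : ℝ => z₀ + ε • w).tendsto' 0 z₀ (by simp)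

section RescaledKernel

variable {E F : Type*} [NormedAddCommGroup E] [NormedSpace ℝ E] [FiniteDimensional ℝ E]
  [MeasurableSpace E] [BorelSpace E] (μ : Measure E) [μ.IsAddHaarMeasure]
  [NormedAddCommGroup F] [NormedSpace ℝ F]

def rescaledKernel (φ : E → ℝ) (z₀ : E) (ε : ℝ) (z : E) : ℝ :=
  (ε ^ finrank ℝ E)⁻¹ * φ (ε⁻¹ • (z - z₀))

theorem integral_rescaledKernel_smul (φ : E → ℝ) (g : E → F) (z₀ : E) {ε : ℝ} (hε : 0 < ε) :
    ∫ z, rescaledKernel φ z₀ ε z • g z ∂μ = ∫ w, φ w • g (z₀ + ε • w) ∂μ := by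
  calc ∫ z, rescaledKernel φ z₀ ε z • g z ∂μ
      = (ε ^ finrank ℝ E)⁻¹ • ∫ w, φ (ε⁻¹ • w) • g (z₀ + w) ∂μ := by
        rw [← integral_smul,
          ← integral_add_left_eq_self (fun z => rescaledKernel φ z₀ ε z • g z) z₀]
        simp only [rescaledKernel, add_sub_cancel_left, mul_smul]
    _ = ∫ w, φ (ε⁻¹ • ε • w) • g (z₀ + ε • w) ∂μ :=
        (Measure.integral_comp_smul_of_nonneg μ (fun w => φ (ε⁻¹ • w) • g (z₀ + w)) ε
          (hR := hε.le)).symm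
    _ = ∫ w, φ w • g (z₀ + ε • w) ∂μ := by simp only [smul_smul, inv_mul_cancel₀ hε.ne', one_smul]

theorem tendsto_integral_rescaledKernel_smul [CompleteSpace F] {φ : E → ℝ} (hφ : Integrable φ μ)
    {g : E → F} (hg_bdd : ∃ C, ∀ z, ‖g z‖ ≤ C) (hg : Continuous g) (z₀ : E) :
    Tendsto (fun ε => ∫ z, rescaledKernel φ z₀ ε z • g z ∂μ) (𝓝[>] 0)
      (𝓝 ((∫ w, φ w ∂μ) • g z₀)) :=
  ((tendsto_integral_smul_comp_add_smul hφ hg_bdd hg z₀).mono_left nhdsWithin_le_nhds).congr'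
    (eventually_nhdsWithin_of_forall fun _ hε => (integral_rescaledKernel_smul μ φ g z₀ hε).symm)

end RescaledKernel

theorem WP_mul_conj_WP (h q₀ p₀ q p x : ℝ) :
    WP h q₀ p₀ x * starRingEnd ℂ (WP h q p x) =
      (((2 / h) ^ ((1 : ℝ) / 4)) ^ 2 : ℝ) *
        cexp (-(2 * π / h : ℝ) * x ^ 2
          + ((2 * π * (q₀ + q) / h : ℝ) + (2 * π * (p₀ - p) / h : ℝ) * I) * x
          + ((-(π * (q₀ ^ 2 + q ^ 2) / h) : ℝ) + (2 * π * (p * q - p₀ * q₀) / h : ℝ) * I)) := by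
  simp only [WP, map_mul, conj_ofReal, ← exp_conj, conj_I]
  rw [mul_mul_mul_comm, ← Complex.exp_add, ← Complex.exp_add, ← Complex.exp_add]
  push_cast
  ring_nf

theorem norm_ip_WP_sq {h : ℝ} (hh : 0 < h) (q₀ p₀ q p : ℝ) :
    ‖ip (WP h q₀ p₀) (WP h q p)‖ ^ 2 = Real.exp (-(π * ((q - q₀) ^ 2 + (p - p₀) ^ 2) / h)) := by
  have hC : ((2 / h) ^ ((1 : ℝ) / 4)) ^ 4 = 2 / h := by
    rw [← Real.rpow_natCast, ← Real.rpow_mul (by positivity)]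
    norm_num
  rw [ip, funext (WP_mul_conj_WP h q₀ p₀ q p), integral_const_mul, norm_mul, norm_real,
    norm_integral_cexp_quadratic (by positivity), Real.norm_of_nonneg (by positivity), mul_pow,
    mul_pow, sq_sqrt (by positivity), ← pow_mul, hC, ← Real.exp_nat_mul]
  rw [← mul_assoc, show 2 / h * (π / (2 * π / h)) = 1 by field_simp, one_mul]
  simp only [add_re, ofReal_re, mul_re, I_re, ofReal_im, I_im, add_im, mul_im]
  congr 1
  push_cast
  field_simp
  ring

/-- Husimi measures of wave packets converge weakly to the Dirac mass. -/
theorem husimi_wave_packet_tendsto_dirac (q₀ p₀ : ℝ) (g : ℝ × ℝ → ℂ)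
    (hgb : ∃ C : ℝ, ∀ z, ‖g z‖ ≤ C) (hgc : Continuous g) :
    Filter.Tendsto
      (fun h : ℝ =>
        ∫ z : ℝ × ℝ,
          ((h⁻¹ * ‖ip (WP h q₀ p₀) (WP h z.1 z.2)‖ ^ 2 : ℝ) : ℂ) * g z)
      (nhdsWithin 0 (Set.Ioi 0)) (nhds (g (q₀, p₀))) := by
  have hlim := (tendsto_integral_rescaledKernel_smul volume
    (integrable_exp_neg_mul_sq_add_sq pi_pos) hgb hgc (q₀, p₀)).comp tendsto_sqrt_nhdsGT_zero
  rw [integral_exp_neg_mul_sq_add_sq pi_pos.le, div_self pi_ne_zero, one_smul] at hlim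
  set φ : ℝ × ℝ → ℝ := fun w => Real.exp (-π * (w.1 ^ 2 + w.2 ^ 2))
  have hkernel : ∀ h > 0, ∀ z : ℝ × ℝ,
      rescaledKernel φ (q₀, p₀) √h z = h⁻¹ * ‖ip (WP h q₀ p₀) (WP h z.1 z.2)‖ ^ 2 := by
    intro h hh z
    simp only [rescaledKernel, φ, norm_ip_WP_sq hh, finrank_prod, finrank_self, Prod.smul_fst,
      Prod.smul_snd, Prod.fst_sub, Prod.snd_sub, smul_eq_mul, mul_pow, inv_pow, sq_sqrt hh.le]
    ring_nf
  refine hlim.congr' (eventually_nhdsWithin_of_forall fun h hh => ?_)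
  simp only [Function.comp_apply, hkernel h hh, real_smul]
end
end

section
/- There exists a constant C > 0 such that for every integer n ≥ 1, | A_n − ( −i·tanθ + β·λ^{−2n} ) | ≤ C·λ^{−4n}, where A_n = (a_n²·(1−iγ_n))^{−1} − iγ_n and β = (1+2i·tanθ)/cos²θ. -/
open Real Complex MeasureTheory

noncomputable section

/-- The large eigenvalue `λ = (3+√5)/2` of the cat map. -/
def lam : ℝ := (3 + Real.sqrt 5) / 2

/-- The angle `θ` of the unstable direction: `tan θ = (√5−1)/2`. -/
def θc : ℝ := Real.arctan ((Real.sqrt 5 - 1) / 2)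

/-- entry `a_n` of `Mⁿ`. -/
def an (n : ℕ) : ℝ := Real.cos θc ^ 2 * lam ^ (n : ℤ) + Real.sin θc ^ 2 * lam ^ (-(n : ℤ))

/-- entry `b_n = c_n` of `Mⁿ`. -/
def bn (n : ℕ) : ℝ := Real.cos θc * Real.sin θc * (lam ^ (n : ℤ) - lam ^ (-(n : ℤ)))

/-- entry `d_n` of `Mⁿ`. -/
def dn (n : ℕ) : ℝ := Real.sin θc ^ 2 * lam ^ (n : ℤ) + Real.cos θc ^ 2 * lam ^ (-(n : ℤ))

/-- `γ_n = b_n / a_n`. -/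
def gn (n : ℕ) : ℝ := bn n / an n

/-- `β = (1 + 2i tan θ)/cos² θ`. -/
def βc : ℂ := (1 + 2 * Complex.I * (Real.tan θc : ℂ)) / ((Real.cos θc : ℂ)) ^ 2

/-- `A_n = (a_n² (1 − i γ_n))⁻¹ − i γ_n`. -/
def An (n : ℕ) : ℂ := (((an n : ℂ)) ^ 2 * (1 - Complex.I * (gn n : ℂ)))⁻¹ - Complex.I * (gn n : ℂ)

/-- The L² normalizing constant `C(h,n)` of the Gaussian `e^{-(π/h) A_n x²}`. -/
def Chn (h : ℝ) (n : ℕ) : ℝ := (2 * (An n).re / h) ^ ((1 : ℝ) / 4)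

/-- The propagated wave packet in closed form, `F_n^h`. -/
def Fnh (h : ℝ) (n : ℕ) : ℝ → ℂ := fun x =>
  (Chn h n : ℂ) * Complex.exp (-((Real.pi / h : ℝ) : ℂ) * An n * (x : ℂ) ^ 2)

/-- The damped Lagrangian state `L^h(n)`. -/
def Lhn (h : ℝ) (n : ℕ) : ℝ → ℂ := fun x =>
  (Chn h n : ℂ) * Complex.exp ((Real.pi * Real.tan θc * x ^ 2 / h : ℝ) * Complex.I) *
    Complex.exp (-((Real.pi : ℝ) : ℂ) * βc * (x : ℂ) ^ 2 / ((h * lam ^ (2 * n) : ℝ) : ℂ))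

/-- The metaplectic operator of `Mⁿ`. -/
def MhatN (h : ℝ) (n : ℕ) : (ℝ → ℂ) → (ℝ → ℂ) := Mhat h (an n) (bn n) (bn n) (dn n)

/-- Membership in `D_θ`, the closed `cos(θ)/2`-neighborhood of the line `ξ = tan θ · x`. -/
def inD (q p : ℝ) : Prop := |q * Real.sin θc - p * Real.cos θc| ≤ Real.cos θc / 2

/-!
Write `t = tan θ` and `m = λ^{-2n} ∈ (0, 1]`. Since `sin θ = t cos θ` and `cos² θ = 1/(1 + t²)`,
`a_n² = (1 + t²m)² / ((1 + t²)² m)` and `γ_n = t(1 - m)/(1 + t²m)`, so `A_n` is a rational function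
of `m` alone. Its expansion at `m = 0` is `-i t + (1 + 2i t)(1 + t²) m + m² (1 + t²) R(m)`, and
`(1 + 2i t)(1 + t²) = β`. Every denominator of `R` has real part `≥ 1` on `[0, 1]`, so `R` is
continuous there and hence bounded.
-/

def Aparam (t m : ℂ) : ℂ :=
  ((1 + t ^ 2 * m) ^ 2 / ((1 + t ^ 2) ^ 2 * m) * (1 - I * (t * (1 - m) / (1 + t ^ 2 * m))))⁻¹ -
    I * (t * (1 - m) / (1 + t ^ 2 * m))

def Aremainder (t m : ℂ) : ℂ :=
  -(1 + t ^ 2) * (t ^ 2 * (2 + t ^ 2 * m) + I * t * (1 - t ^ 2 * (1 - m))) /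
      ((1 + t ^ 2 * m) * (1 + t ^ 2 * m - I * t * (1 - m)) * (1 - I * t)) -
    I * t ^ 3 / (1 + t ^ 2 * m)

theorem Aparam_sub_eq {t m : ℂ} (hm : m ≠ 0) (hE : 1 + t ^ 2 * m ≠ 0)
    (hD : 1 + t ^ 2 * m - I * t * (1 - m) ≠ 0) (hD₀ : 1 - I * t ≠ 0) :
    Aparam t m - (-I * t + (1 + 2 * I * t) * (1 + t ^ 2) * m) =
      m ^ 2 * (1 + t ^ 2) * Aremainder t m := by
  unfold Aparam Aremainder
  -- `D` and `D₀` are kept opaque so that `field_simp` clears them; `I ^ 2 = -1` is used only after.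
  generalize hDdef : 1 + t ^ 2 * m - I * t * (1 - m) = D at hD ⊢
  generalize hD₀def : 1 - I * t = D₀ at hD₀ ⊢
  have hX : (1 + t ^ 2 * m) ^ 2 / ((1 + t ^ 2) ^ 2 * m) * (1 - I * (t * (1 - m) / (1 + t ^ 2 * m)))
      = (1 + t ^ 2 * m) * D / ((1 + t ^ 2) ^ 2 * m) := by
    rw [← hDdef]; field_simp
  rw [hX, inv_div]
  field_simp
  subst hDdef hD₀def
  ring_nf
  simp only [I_sq, I_pow_three]
  ring

theorem Aremainder_denominators_ne_zero (t : ℝ) {m : ℝ} (hm : 0 ≤ m) :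
    (1 + (t : ℂ) ^ 2 * m ≠ 0) ∧ (1 + (t : ℂ) ^ 2 * m - I * t * (1 - m) ≠ 0) ∧ 1 - I * t ≠ 0 := by
  have h : 0 < 1 + t ^ 2 * m := by positivity
  refine ⟨?_, ?_, ?_⟩ <;> refine ne_of_apply_ne re ?_ <;> simp [← ofReal_pow, h.ne']

theorem continuousOn_Aremainder (t : ℝ) :
    ContinuousOn (fun m : ℝ => Aremainder t m) (Set.Icc 0 1) := by
  unfold Aremainder
  have hden := fun m (hm : m ∈ Set.Icc (0 : ℝ) 1) => Aremainder_denominators_ne_zero t hm.1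
  fun_prop (disch := grind)

theorem exists_norm_Aparam_sub_le (t : ℝ) :
    ∃ K, ∀ m : ℝ, 0 < m → m ≤ 1 →
      ‖Aparam t m - (-I * t + (1 + 2 * I * t) * (1 + (t : ℂ) ^ 2) * m)‖ ≤ K * m ^ 2 := by
  obtain ⟨K, hK⟩ := isCompact_Icc.exists_bound_of_continuousOn (continuousOn_Aremainder t)
  refine ⟨(1 + t ^ 2) * K, fun m hm₀ hm₁ => ?_⟩
  obtain ⟨hE, hD, hD₀⟩ := Aremainder_denominators_ne_zero t hm₀.le
  rw [Aparam_sub_eq (by exact_mod_cast hm₀.ne') hE hD hD₀, norm_mul, norm_mul]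
  have h1t : ‖(1 + (t : ℂ) ^ 2)‖ = 1 + t ^ 2 := by norm_cast; simp; positivity
  rw [h1t, norm_pow, norm_real, norm_of_nonneg hm₀.le]
  calc m ^ 2 * (1 + t ^ 2) * ‖Aremainder t m‖ ≤ m ^ 2 * (1 + t ^ 2) * K := by
        gcongr; exact hK m ⟨hm₀.le, hm₁⟩
    _ = (1 + t ^ 2) * K * m ^ 2 := by ring

theorem one_le_lam : 1 ≤ lam := by
  unfold lam; linarith [Real.sqrt_nonneg 5]

theorem lam_pos : 0 < lam := zero_lt_one.trans_le one_le_lam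

theorem lam_zpow_neg_two_mul (n : ℕ) : lam ^ (-(2 * (n : ℤ))) = (lam ^ (n : ℤ))⁻¹ ^ 2 := by
  rw [← zpow_neg, ← zpow_natCast, ← zpow_mul]; ring_nf

theorem cos_θc_ne_zero : Real.cos θc ≠ 0 := (Real.cos_arctan_pos _).ne'

theorem an_eq (n : ℕ) :
    an n = Real.cos θc ^ 2 * lam ^ (n : ℤ) * (1 + Real.tan θc ^ 2 * lam ^ (-(2 * (n : ℤ)))) := by
  have := lam_pos.ne'
  rw [an, ← Real.tan_mul_cos cos_θc_ne_zero, lam_zpow_neg_two_mul, zpow_neg]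
  field_simp

theorem an_sq_eq (n : ℕ) :
    an n ^ 2 = (1 + Real.tan θc ^ 2 * lam ^ (-(2 * (n : ℤ)))) ^ 2 /
      ((1 + Real.tan θc ^ 2) ^ 2 * lam ^ (-(2 * (n : ℤ)))) := by
  have := lam_pos.ne'
  rw [an_eq, ← Real.inv_one_add_tan_sq cos_θc_ne_zero, lam_zpow_neg_two_mul]
  field_simp

theorem gn_eq (n : ℕ) :
    gn n = Real.tan θc * (1 - lam ^ (-(2 * (n : ℤ)))) /
      (1 + Real.tan θc ^ 2 * lam ^ (-(2 * (n : ℤ)))) := by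
  have := lam_pos.ne'
  have := cos_θc_ne_zero
  rw [gn, an_eq, bn, ← Real.tan_mul_cos cos_θc_ne_zero, lam_zpow_neg_two_mul, zpow_neg]
  field_simp

theorem An_eq_Aparam (n : ℕ) :
    An n = Aparam (Real.tan θc) ((lam ^ (-(2 * (n : ℤ))) : ℝ) : ℂ) := by
  rw [An, ← ofReal_pow, an_sq_eq, gn_eq]
  generalize Real.tan θc = t
  generalize lam ^ (-(2 * (n : ℤ))) = m
  push_cast
  rfl

theorem βc_eq : βc = (1 + 2 * I * (Real.tan θc : ℂ)) * (1 + (Real.tan θc : ℂ) ^ 2) := by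
  have h := Real.inv_one_add_tan_sq cos_θc_ne_zero
  rw [βc, div_eq_mul_inv, ← ofReal_pow, ← h]
  push_cast
  rw [inv_inv]

/-- asymptotics of `A_n`. -/
theorem An_asymptotics :
    ∃ C : ℝ, 0 < C ∧ ∀ n : ℕ, 1 ≤ n →
      ‖An n - (-Complex.I * (Real.tan θc : ℂ) + βc * ((lam ^ (-(2 * (n : ℤ))) : ℝ) : ℂ))‖ ≤
        C * lam ^ (-(4 * (n : ℤ))) := by
  obtain ⟨K, hK⟩ := exists_norm_Aparam_sub_le (Real.tan θc)
  refine ⟨max K 1, by positivity, fun n _ => ?_⟩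
  have hm₀ : 0 < lam ^ (-(2 * (n : ℤ))) := zpow_pos lam_pos _
  have hm₁ : lam ^ (-(2 * (n : ℤ))) ≤ 1 := zpow_le_one_of_nonpos₀ one_le_lam (by omega)
  have hsq : lam ^ (-(4 * (n : ℤ))) = (lam ^ (-(2 * (n : ℤ)))) ^ 2 := by
    rw [← zpow_natCast, ← zpow_mul]; ring_nf
  rw [An_eq_Aparam, βc_eq, hsq]
  calc _ ≤ K * (lam ^ (-(2 * (n : ℤ)))) ^ 2 := hK _ hm₀ hm₁
    _ ≤ max K 1 * (lam ^ (-(2 * (n : ℤ)))) ^ 2 := by gcongr; exact le_max_left K 1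
end
end

section
/- For every h > 0, every n ∈ ℕ and every (q,p) ∈ ℝ², the overlap of the damped Lagrangian state with a Gaussian wave packet is given by the exact Gaussian-integral formula: ⟨L^h(n), Φ^h_{(q,p)}⟩ = C(h,n)·C_h·h^{1/2}·A^{−1/2}·exp( −(π/h)·( (p+iq)²·A^{−1} + q² − 2ipq ) ), where A = 1 − i·tanθ + β·λ^{−2n} (which has strictly positive real part) and A^{−1/2} denotes the principal branch of the inverse square root. -/
open Real Complex MeasureTheory

noncomputable section

lemma myOfRealMulCpow {a : ℝ} (ha : 0 < a) {z : ℂ} (hz : z ≠ 0) (r : ℂ) :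
    ((a : ℂ) * z) ^ r = (a : ℂ) ^ r * z ^ r := by
  have ha' : (a : ℂ) ≠ 0 := Complex.ofReal_ne_zero.mpr ha.ne'
  rw [Complex.cpow_def_of_ne_zero (mul_ne_zero ha' hz), Complex.log_ofReal_mul ha hz,
    add_mul, Complex.exp_add, ← Complex.cpow_def_of_ne_zero hz, Complex.ofReal_log ha.le,
    ← Complex.cpow_def_of_ne_zero ha']

/-- exact Gaussian-integral formula for the overlap of the damped
Lagrangian state with a Gaussian wave packet. -/
theorem lagrangian_wave_packet_overlap (h : ℝ) (hh : 0 < h) (n : ℕ) (Cn : ℝ)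
    (hCn : 0 < Cn) (q p : ℝ) :
    0 < (1 - Complex.I * (Real.tan θc : ℂ) + βc * ((lam ^ (-(2 * (n : ℤ))) : ℝ) : ℂ)).re ∧
    ip (fun x : ℝ =>
        (Cn : ℂ) * Complex.exp ((Real.pi * Real.tan θc * x ^ 2 / h : ℝ) * Complex.I) *
          Complex.exp (-((Real.pi : ℝ) : ℂ) * βc * (x : ℂ) ^ 2 / ((h * lam ^ (2 * n) : ℝ) : ℂ)))
      (WP h q p) =
      (Cn : ℂ) * (((2 / h) ^ ((1 : ℝ) / 4) : ℝ) : ℂ) * ((Real.sqrt h : ℝ) : ℂ) *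
        (1 - Complex.I * (Real.tan θc : ℂ) + βc * ((lam ^ (-(2 * (n : ℤ))) : ℝ) : ℂ)) ^
          (-(1 / 2) : ℂ) *
        Complex.exp (-((Real.pi / h : ℝ) : ℂ) *
          (((p : ℂ) + Complex.I * (q : ℂ)) ^ 2 *
              (1 - Complex.I * (Real.tan θc : ℂ) + βc * ((lam ^ (-(2 * (n : ℤ))) : ℝ) : ℂ))⁻¹ +
            (q : ℂ) ^ 2 - 2 * Complex.I * (p : ℂ) * (q : ℂ))) := by

  have hlam : 0 < lam := by
    have : 0 ≤ Real.sqrt 5 := Real.sqrt_nonneg 5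
    unfold lam; linarith
  have hL : 0 < lam ^ (2 * n) := pow_pos hlam _
  have hcos : 0 < Real.cos θc := Real.cos_arctan_pos _
  have hπ : (0:ℝ) < Real.pi := Real.pi_pos
  have hh0 : (h : ℂ) ≠ 0 := Complex.ofReal_ne_zero.mpr hh.ne'
  have hπ0 : (Real.pi : ℂ) ≠ 0 := Complex.ofReal_ne_zero.mpr hπ.ne'
  have hlamC : (lam : ℂ) ≠ 0 := Complex.ofReal_ne_zero.mpr hlam.ne'
  have hzp : ((lam ^ (-(2 * (n : ℤ))) : ℝ) : ℂ) = (((lam ^ (2 * n) : ℝ)) : ℂ)⁻¹ := by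
    have e1 : (-(2 * (n : ℤ))) = -(((2 * n : ℕ) : ℤ)) := by push_cast; ring
    rw [e1, zpow_neg, zpow_natCast]; push_cast; ring
  have hβre : βc.re = (Real.cos θc ^ 2)⁻¹ := by
    have e : βc = (1 + 2 * Complex.I * (Real.tan θc : ℂ)) / ((Real.cos θc ^ 2 : ℝ) : ℂ) := by
      unfold βc; push_cast; ring
    rw [e, Complex.div_ofReal_re]
    simp [one_div]
  set A : ℂ := 1 - Complex.I * (Real.tan θc : ℂ) + βc * ((lam ^ (-(2 * (n : ℤ))) : ℝ) : ℂ)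
    with hAdef
  have hAre : 0 < A.re := by
    have h1 : (0:ℝ) < (lam ^ (-(2 * (n:ℤ))) : ℝ) := zpow_pos hlam _
    have h2 : A.re = 1 + (lam ^ (-(2 * (n:ℤ))) : ℝ) * βc.re := by
      rw [hAdef, mul_comm βc]
      simp only [Complex.add_re, Complex.sub_re, Complex.one_re, Complex.mul_re,
        Complex.I_re, Complex.ofReal_re, Complex.I_im, Complex.ofReal_im,
        Complex.re_ofReal_mul]
      ring
    rw [h2, hβre]
    have h3 : 0 < (Real.cos θc ^ 2)⁻¹ := by positivity
    nlinarith
  refine ⟨hAre, ?_⟩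
  have hA0 : A ≠ 0 := fun hc => by simp [hc] at hAre
  set b : ℂ := ((-(Real.pi / h) : ℝ) : ℂ) * A with hbdef
  set c : ℂ := (((2 * Real.pi / h) : ℝ) : ℂ) * ((q : ℂ) - Complex.I * (p : ℂ)) with hcdef
  set d : ℂ := ((-(Real.pi / h) : ℝ) : ℂ) * ((q : ℂ) ^ 2 - 2 * Complex.I * (p : ℂ) * (q : ℂ))
    with hddef
  have hbre : b.re < 0 := by
    rw [hbdef, Complex.re_ofReal_mul]
    nlinarith [div_pos hπ hh]
  have key : ∀ x : ℝ,
      ((Cn : ℂ) * Complex.exp ((Real.pi * Real.tan θc * x ^ 2 / h : ℝ) * Complex.I) *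
          Complex.exp (-((Real.pi : ℝ) : ℂ) * βc * (x : ℂ) ^ 2 / ((h * lam ^ (2 * n) : ℝ) : ℂ))) *
        (starRingEnd ℂ) (WP h q p x) =
      ((Cn : ℂ) * (((2 / h) ^ ((1 : ℝ) / 4) : ℝ) : ℂ)) *
        Complex.exp (b * (x : ℂ) ^ 2 + c * (x : ℂ) + d) := by
    intro x
    simp only [WP, map_mul, Complex.conj_ofReal, ← Complex.exp_conj, Complex.conj_I]
    rw [show (Cn : ℂ) * Complex.exp ((Real.pi * Real.tan θc * x ^ 2 / h : ℝ) * Complex.I) *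
          Complex.exp (-((Real.pi : ℝ) : ℂ) * βc * (x : ℂ) ^ 2 / ((h * lam ^ (2 * n) : ℝ) : ℂ)) *
        ((((2 / h) ^ ((1 : ℝ) / 4) : ℝ) : ℂ) *
          (Complex.exp (((2 * Real.pi * p * (x - q) / h : ℝ) : ℂ) * -Complex.I) *
            Complex.exp (((-(Real.pi * (x - q) ^ 2 / h) : ℝ) : ℂ)))) =
        ((Cn : ℂ) * (((2 / h) ^ ((1 : ℝ) / 4) : ℝ) : ℂ)) *
          (Complex.exp ((Real.pi * Real.tan θc * x ^ 2 / h : ℝ) * Complex.I) *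
            (Complex.exp (-((Real.pi : ℝ) : ℂ) * βc * (x : ℂ) ^ 2 / ((h * lam ^ (2 * n) : ℝ) : ℂ)) *
              (Complex.exp (((2 * Real.pi * p * (x - q) / h : ℝ) : ℂ) * -Complex.I) *
                Complex.exp (((-(Real.pi * (x - q) ^ 2 / h) : ℝ) : ℂ))))) from by ring,
      ← Complex.exp_add, ← Complex.exp_add, ← Complex.exp_add]
    congr 1
    congr 1
    rw [hbdef, hcdef, hddef, hAdef, hzp]
    push_cast
    field_simp [hh0, hlamC]
    ring
  unfold ip
  simp_rw [key]
  rw [MeasureTheory.integral_const_mul, integral_cexp_quadratic hbre]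
  have hsq : ((q:ℂ) - Complex.I * (p:ℂ)) ^ 2 = -(((p:ℂ) + Complex.I * (q:ℂ)) ^ 2) := by
    have h2 : Complex.I ^ 2 = -1 := Complex.I_sq
    linear_combination ((p:ℂ) ^ 2 + (q:ℂ) ^ 2) * h2
  have hph0 : (((Real.pi / h) : ℝ) : ℂ) ≠ 0 := Complex.ofReal_ne_zero.mpr (div_pos hπ hh).ne'
  have hfac : ((Real.pi : ℂ) / -b) ^ ((1:ℂ) / 2) =
      ((Real.sqrt h : ℝ) : ℂ) * A ^ (-(1 / 2) : ℂ) := by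
    have hnb : -b = (((Real.pi / h) : ℝ) : ℂ) * A := by rw [hbdef]; push_cast; ring
    have e1 : ((Real.pi : ℂ) / -b) = ((h : ℝ) : ℂ) * A⁻¹ := by
      rw [hnb, div_eq_iff (mul_ne_zero hph0 hA0)]
      push_cast
      field_simp
    have harg : A.arg ≠ Real.pi := by
      intro hc
      have := (Complex.arg_eq_pi_iff.mp hc).1
      linarith
    have e5 : ((h : ℝ) : ℂ) ^ ((1:ℂ) / 2) = ((Real.sqrt h : ℝ) : ℂ) := by
      rw [show ((1:ℂ)/2) = (((1/2 : ℝ)):ℂ) by norm_num, ← Complex.ofReal_cpow hh.le,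
        Real.sqrt_eq_rpow]
    rw [e1, myOfRealMulCpow hh (inv_ne_zero hA0), Complex.inv_cpow _ _ harg,
      ← Complex.cpow_neg, e5]
  have e2 : c ^ 2 = ((-(4 * Real.pi ^ 2 / h ^ 2) : ℝ) : ℂ) * ((p:ℂ) + Complex.I * (q:ℂ)) ^ 2 := by
    rw [hcdef, mul_pow, hsq]
    push_cast
    ring
  have e3 : 4 * b = ((-(4 * Real.pi / h) : ℝ) : ℂ) * A := by
    rw [hbdef]; push_cast; ring
  have hr : (-(4 * Real.pi / h) : ℝ) ≠ 0 := by
    have : 0 < 4 * Real.pi / h := by positivity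
    linarith
  have e4 : c ^ 2 / (4 * b) =
      (((Real.pi / h) : ℝ) : ℂ) * ((p:ℂ) + Complex.I * (q:ℂ)) ^ 2 * A⁻¹ := by
    rw [e2, e3, div_eq_iff (mul_ne_zero (Complex.ofReal_ne_zero.mpr hr) hA0)]
    push_cast
    field_simp [hA0]
  have e6 : d - c ^ 2 / (4 * b) =
      -((Real.pi / h : ℝ) : ℂ) *
        (((p:ℂ) + Complex.I * (q:ℂ)) ^ 2 * A⁻¹ + (q:ℂ) ^ 2 -
          2 * Complex.I * (p:ℂ) * (q:ℂ)) := by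
    rw [e4, hddef]
    push_cast
    ring
  rw [hfac, e6]
  ring
end
end
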